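/- arXiv:math/0303204 — 2 statements merged into one kernel-verified Lean document; each statement's English description precedes it below -/
import Mathlib

section
/- Let r ≥ 2 be an integer, z ∈ ℂ, and u_0, u_1, …, u_{r−1} ∈ ℂ. Define the well-poised balanced term ratio h(x) = z · (∏_{m=1}^{r−1} [x+u_0+u_m]/[x+u_0−u_m]) · [x+u_0−∑_{k=1}^{r−1}u_k]/[x+u_0+∑_{k=1}^{r−1}u_k]. Then h is an elliptic function of x and of each of the parameters u_0, u_1, …, u_{r−1} separately, all with the same periods σ⁻¹ and τσ⁻¹: wherever all denominators involved are nonzero, h is unchanged when any one of the variables x, u_0, u_1, …, u_{r−1} is shifted by σ⁻¹ or by τσ⁻¹. -/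
/-!
Each of the periods `σ⁻¹` and `τσ⁻¹` is a quasi-period of `θ₁` with a multiplier of the form
`c · e^{βu}`. In the well-poised balanced ratio the numerator and denominator carry the same
number of theta factors, and under each of the shifts (of `x`, `u₀` or one `u_i`) the shifted
arguments of the numerator and of the denominator have the same sum, so all multipliers cancel.
-/

open scoped BigOperators

/-- The Jacobi theta function
`θ₁(u;σ,τ) = -i ∑_{n ∈ ℤ} (-1)ⁿ e^{πiτ(n+1/2)²} e^{2πiσ(n+1/2)u}`. -/
noncomputable def theta1 (u σ τ : ℂ) : ℂ :=
  -Complex.I * ∑' n : ℤ, (-1 : ℂ) ^ n *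
    Complex.exp ((Real.pi : ℂ) * Complex.I * τ * ((n : ℂ) + 1 / 2) ^ 2) *
    Complex.exp (2 * (Real.pi : ℂ) * Complex.I * σ * ((n : ℂ) + 1 / 2) * u)

open Complex Finset Function
open scoped Real

theorem Fintype.sum_update_add {ι M : Type*} [Fintype ι] [DecidableEq ι] [AddCommMonoid M]
    (w : ι → M) (i : ι) (v : M) : ∑ k, update w i (w i + v) k = ∑ k, w k + v := by
  rw [Finset.sum_update_of_mem (mem_univ i), sum_eq_add_sum_sdiff_singleton_of_mem (mem_univ i)]
  abel

theorem Fintype.prod_comp_update {ι α M : Type*} [Fintype ι] [DecidableEq ι] [CommMonoid M]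
    (g : α → M) (w : ι → α) (i : ι) (v : α) :
    ∏ k, g (update w i v k) = g v * ∏ k ∈ univ \ {i}, g (w k) := by
  simp_rw [apply_update (fun _ => g), Finset.prod_update_of_mem (mem_univ i)]

def IsQuasiPeriod (f : ℂ → ℂ) (ω : ℂ) : Prop :=
  ∃ c β : ℂ, c ≠ 0 ∧ ∀ a, f (a + ω) = c * exp (β * a) * f a

-- The term ratio `h` depends on `x` and `u₀` only through `y = x + u₀`.
noncomputable def wellPoisedRatio {ι : Type*} [Fintype ι] (f : ℂ → ℂ) (z y : ℂ) (w : ι → ℂ) : ℂ :=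
  z * (∏ m, f (y + w m) / f (y - w m)) * (f (y - ∑ k, w k) / f (y + ∑ k, w k))

namespace IsQuasiPeriod

variable {f : ℂ → ℂ} {ω : ℂ} {ι : Type*} [Fintype ι]

theorem exists_div_add (hf : IsQuasiPeriod f ω) :
    ∃ β : ℂ, ∀ a b, f (a + ω) / f (b + ω) = exp (β * (a - b)) * (f a / f b) := by
  obtain ⟨c, β, hc, hf⟩ := hf
  refine ⟨β, fun a b => ?_⟩
  rw [hf, hf, mul_div_mul_comm, mul_div_mul_left _ _ hc, mul_sub, exp_sub]

theorem div_mul_div_add_sub (hf : IsQuasiPeriod f ω) {p q s t : ℂ} (h : p - t = s - q) :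
    f (p + ω) / f (q - ω) * (f (s - ω) / f (t + ω)) = f p / f q * (f s / f t) := by
  obtain ⟨β, hβ⟩ := hf.exists_div_add
  have hsub := hβ (s - ω) (q - ω)
  rw [sub_add_cancel, sub_add_cancel, sub_sub_sub_cancel_right, ← h] at hsub
  have key : f (s - ω) / f (q - ω) = exp (-(β * (p - t))) * (f s / f q) := by
    rw [hsub, ← mul_assoc, ← exp_add, neg_add_cancel, exp_zero, one_mul]
  calc f (p + ω) / f (q - ω) * (f (s - ω) / f (t + ω))
      = f (p + ω) / f (t + ω) * (f (s - ω) / f (q - ω)) := by ring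
    _ = f p / f q * (f s / f t) := by
      rw [hβ, key, mul_mul_mul_comm, ← exp_add, add_neg_cancel, exp_zero, one_mul]; ring

theorem wellPoisedRatio_add (hf : IsQuasiPeriod f ω) (z y : ℂ) (w : ι → ℂ) :
    wellPoisedRatio f z (y + ω) w = wellPoisedRatio f z y w := by
  obtain ⟨β, hβ⟩ := hf.exists_div_add
  simp only [wellPoisedRatio, add_right_comm y ω, add_sub_right_comm y ω, hβ]
  rw [prod_mul_distrib, ← exp_sum]
  have hexp : exp (∑ m, β * (y + w m - (y - w m))) * exp (β * (y - ∑ k, w k - (y + ∑ k, w k)))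
      = 1 := by
    rw [← exp_add, ← exp_zero]
    congr 1
    simp only [add_sub_sub_cancel, ← mul_sum, sum_add_distrib]
    ring
  linear_combination (z * (∏ m, f (y + w m) / f (y - w m)) *
    (f (y - ∑ k, w k) / f (y + ∑ k, w k))) * hexp

theorem wellPoisedRatio_update_add [DecidableEq ι] (hf : IsQuasiPeriod f ω) (z y : ℂ)
    (w : ι → ℂ) (i : ι) :
    wellPoisedRatio f z y (update w i (w i + ω)) = wellPoisedRatio f z y w := by
  have hpair := hf.div_mul_div_add_sub
    (p := y + w i) (q := y - w i) (s := y - ∑ k, w k) (t := y + ∑ k, w k) (by ring)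
  simp only [wellPoisedRatio, Fintype.sum_update_add,
    Fintype.prod_comp_update (fun v => f (y + v) / f (y - v)),
    prod_eq_mul_prod_sdiff_singleton_of_mem (mem_univ i), ← add_assoc, sub_add_eq_sub_sub]
  linear_combination (z * ∏ k ∈ univ \ {i}, f (y + w k) / f (y - w k)) * hpair

end IsQuasiPeriod

noncomputable def theta1Term (u σ τ : ℂ) (n : ℤ) : ℂ :=
  (-1 : ℂ) ^ n * exp (π * I * τ * ((n : ℂ) + 1 / 2) ^ 2) *
    exp (2 * π * I * σ * ((n : ℂ) + 1 / 2) * u)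

section Theta

variable {σ τ : ℂ}

theorem theta1_eq_tsum (u : ℂ) : theta1 u σ τ = -I * ∑' n, theta1Term u σ τ n := rfl

theorem theta1Term_add_inv (hσ : σ ≠ 0) (u : ℂ) (n : ℤ) :
    theta1Term (u + σ⁻¹) σ τ n = -theta1Term u σ τ n := by
  have hexp : 2 * π * I * σ * ((n : ℂ) + 1 / 2) * (u + σ⁻¹) =
      2 * π * I * σ * ((n : ℂ) + 1 / 2) * u + n * (2 * π * I) + π * I := by
    field_simp
    ring
  rw [theta1Term, theta1Term, hexp, exp_add, exp_add, exp_int_mul_two_pi_mul_I, exp_pi_mul_I]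
  ring

/-- Completing the square: the shift by `τσ⁻¹` moves the summation index by one. -/
theorem theta1Term_add_tau_mul_inv (hσ : σ ≠ 0) (u : ℂ) (n : ℤ) :
    theta1Term (u + τ * σ⁻¹) σ τ n =
      -exp (-(π * I * τ)) * exp (-(2 * π * I * σ) * u) * theta1Term u σ τ (n + 1) := by
  have hexp :
      π * I * τ * ((n : ℂ) + 1 / 2) ^ 2 + 2 * π * I * σ * ((n : ℂ) + 1 / 2) * (u + τ * σ⁻¹)
      = -(π * I * τ) + -(2 * π * I * σ) * u + (π * I * τ * (((n + 1 : ℤ) : ℂ) + 1 / 2) ^ 2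
        + 2 * π * I * σ * (((n + 1 : ℤ) : ℂ) + 1 / 2) * u) := by
    push_cast
    field_simp
    ring
  rw [theta1Term, theta1Term, zpow_add_one₀ (by norm_num), mul_assoc, ← exp_add, hexp,
    exp_add, exp_add, exp_add]
  ring

theorem theta1_add_inv (hσ : σ ≠ 0) (u : ℂ) : theta1 (u + σ⁻¹) σ τ = -theta1 u σ τ := by
  simp only [theta1_eq_tsum, theta1Term_add_inv hσ, tsum_neg, mul_neg]

theorem theta1_add_tau_mul_inv (hσ : σ ≠ 0) (u : ℂ) :
    theta1 (u + τ * σ⁻¹) σ τ =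
      -exp (-(π * I * τ)) * exp (-(2 * π * I * σ) * u) * theta1 u σ τ := by
  have hshift : ∑' n : ℤ, theta1Term u σ τ (n + 1) = ∑' n, theta1Term u σ τ n :=
    (Equiv.addRight 1).tsum_eq _
  simp only [theta1_eq_tsum, theta1Term_add_tau_mul_inv hσ, tsum_mul_left, hshift]
  ring

theorem isQuasiPeriod_theta1_inv (hσ : σ ≠ 0) : IsQuasiPeriod (theta1 · σ τ) σ⁻¹ :=
  ⟨-1, 0, by norm_num, fun u => by simp [theta1_add_inv hσ]⟩

theorem isQuasiPeriod_theta1_tau_mul_inv (hσ : σ ≠ 0) :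
    IsQuasiPeriod (theta1 · σ τ) (τ * σ⁻¹) :=
  ⟨-exp (-(π * I * τ)), -(2 * π * I * σ), by simp [exp_ne_zero], theta1_add_tau_mul_inv hσ⟩

end Theta

theorem well_poised_balanced_total_ellipticity_general (σ τ : ℂ) (hσ : 0 < σ.im)
    (r : ℕ) (z : ℂ) (u₀ : ℂ) (u : Fin (r - 1) → ℂ) :
    let H : ℂ → ℂ → (Fin (r - 1) → ℂ) → ℂ := fun x w₀ w =>
      z * (∏ m, theta1 (x + w₀ + w m) σ τ / theta1 (x + w₀ - w m) σ τ) *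
        (theta1 (x + w₀ - ∑ k, w k) σ τ / theta1 (x + w₀ + ∑ k, w k) σ τ)
    let D : ℂ → ℂ → (Fin (r - 1) → ℂ) → Prop := fun x w₀ w =>
      (∀ m, theta1 (x + w₀ - w m) σ τ ≠ 0) ∧ theta1 (x + w₀ + ∑ k, w k) σ τ ≠ 0
    ∀ ω : ℂ, (ω = σ⁻¹ ∨ ω = τ * σ⁻¹) → ∀ x : ℂ,
      (D x u₀ u → D (x + ω) u₀ u → H (x + ω) u₀ u = H x u₀ u) ∧
      (D x u₀ u → D x (u₀ + ω) u → H x (u₀ + ω) u = H x u₀ u) ∧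
      (∀ i : Fin (r - 1), D x u₀ u → D x u₀ (Function.update u i (u i + ω)) →
        H x u₀ (Function.update u i (u i + ω)) = H x u₀ u) := by
  intro H D ω hω x
  have hσ₀ : σ ≠ 0 := fun h => by simp [h] at hσ
  have hθ : IsQuasiPeriod (theta1 · σ τ) ω := by
    rcases hω with rfl | rfl
    exacts [isQuasiPeriod_theta1_inv hσ₀, isQuasiPeriod_theta1_tau_mul_inv hσ₀]
  have hH : ∀ x w₀ w, H x w₀ w = wellPoisedRatio (theta1 · σ τ) z (x + w₀) w := fun _ _ _ => rfl
  refine ⟨fun _ _ => ?_, fun _ _ => ?_, fun i _ _ => ?_⟩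
  · rw [hH, hH, add_right_comm, hθ.wellPoisedRatio_add]
  · rw [hH, hH, ← add_assoc, hθ.wellPoisedRatio_add]
  · rw [hH, hH, hθ.wellPoisedRatio_update_add]

/-- The well-poised balanced term ratio
`h(x) = z (∏_{m=1}^{r-1} [x+u₀+u_m]/[x+u₀-u_m]) [x+u₀-∑u_k]/[x+u₀+∑u_k]`
is an elliptic function of `x` and of each parameter `u₀, u₁, …, u_{r-1}` separately,
all with the same periods `σ⁻¹` and `τσ⁻¹` (wherever all denominators are nonzero). -/
theorem well_poised_balanced_total_ellipticity (σ τ : ℂ) (hσ : 0 < σ.im) (hτ : 0 < τ.im)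
    (r : ℕ) (hr : 2 ≤ r) (z : ℂ) (u₀ : ℂ) (u : Fin (r - 1) → ℂ) :
    let H : ℂ → ℂ → (Fin (r - 1) → ℂ) → ℂ := fun x w₀ w =>
      z * (∏ m, theta1 (x + w₀ + w m) σ τ / theta1 (x + w₀ - w m) σ τ) *
        (theta1 (x + w₀ - ∑ k, w k) σ τ / theta1 (x + w₀ + ∑ k, w k) σ τ)
    let D : ℂ → ℂ → (Fin (r - 1) → ℂ) → Prop := fun x w₀ w =>
      (∀ m, theta1 (x + w₀ - w m) σ τ ≠ 0) ∧ theta1 (x + w₀ + ∑ k, w k) σ τ ≠ 0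
    ∀ ω : ℂ, (ω = σ⁻¹ ∨ ω = τ * σ⁻¹) → ∀ x : ℂ,
      (D x u₀ u → D (x + ω) u₀ u → H (x + ω) u₀ u = H x u₀ u) ∧
      (D x u₀ u → D x (u₀ + ω) u → H x (u₀ + ω) u = H x u₀ u) ∧
      (∀ i : Fin (r - 1), D x u₀ u → D x u₀ (Function.update u i (u i + ω)) →
        H x u₀ (Function.update u i (u i + ω)) = H x u₀ u) :=
  well_poised_balanced_total_ellipticity_general σ τ hσ r z u₀ u
end

section
/- Let r ∈ ℕ, z ∈ ℂ, and u_1,…,u_r, v_1,…,v_r ∈ ℂ satisfy both the balancing condition u_1+…+u_r = v_1+…+v_r and the modularity condition u_1²+…+u_r² = v_1²+…+v_r². Then the term ratio h(x) = z·∏_{m=1}^r [x+u_m]/[x+v_m] is modular invariant: for every x ∈ ℂ at which all denominators involved are nonzero, z·∏_{m=1}^r [x+u_m; σ/τ, −1/τ]/[x+v_m; σ/τ, −1/τ] = z·∏_{m=1}^r [x+u_m; σ, τ]/[x+v_m; σ, τ], and likewise z·∏_{m=1}^r [x+u_m; σ, τ+1]/[x+v_m; σ, τ+1] = z·∏_{m=1}^r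 [x+u_m; σ, τ]/[x+v_m; σ, τ]. -/
open scoped BigOperators

/-!
Both transformation laws of `θ₁` multiply `[w; σ, τ]` by a factor of the form `c · exp(a w²)`
with `c ≠ 0` independent of `w`: the constant `e^{πi/4}` for `τ ↦ τ + 1`, and
`-i (-iτ)^{1/2} e^{πiσ²w²/τ}` for `(σ, τ) ↦ (σ/τ, -1/τ)`, which is Mathlib's functional equation for
`jacobiTheta₂` after writing `θ₁` in terms of it. In the term ratio the constants cancel, and the
Gaussian factors contribute `exp(a ∑ₘ ((x+uₘ)² - (x+vₘ)²))`, which is `1` because balancing and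
modularity together give `∑ₘ (x+uₘ)² = ∑ₘ (x+vₘ)²`.
-/

open Complex
open scoped Real

lemma theta1_eq_jacobiTheta₂ (u σ τ : ℂ) :
    theta1 u σ τ = -I * cexp (π * I * τ / 4 + π * I * σ * u) *
      jacobiTheta₂ (σ * u + τ / 2 + 1 / 2) τ := by
  rw [theta1, jacobiTheta₂, mul_assoc (-I)]
  congr 1
  refine Eq.trans (tsum_congr fun n => ?_) tsum_mul_left
  rw [← exp_pi_mul_I, ← exp_int_mul, jacobiTheta₂_term, ← exp_add, ← exp_add, ← exp_add]
  congr 1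
  ring

lemma theta1_add_one (u σ τ : ℂ) :
    theta1 u σ (τ + 1) = cexp (π * I / 4) * theta1 u σ τ := by
  rw [theta1, theta1, mul_left_comm]
  congr 1
  refine Eq.trans (tsum_congr fun n => ?_) tsum_mul_left
  have hsq : π * I * (τ + 1) * ((n : ℂ) + 1 / 2) ^ 2 =
      π * I * τ * ((n : ℂ) + 1 / 2) ^ 2 + π * I / 4 + ((n * (n + 1) : ℤ) : ℂ) * (π * I) := by
    push_cast
    ring
  have heven : cexp (((n * (n + 1) : ℤ) : ℂ) * (π * I)) = 1 := by
    rw [exp_int_mul, exp_pi_mul_I, (Int.even_mul_succ_self n).neg_one_zpow]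
  rw [hsq, exp_add, exp_add, heven]
  ring

lemma theta1_neg_inv {τ : ℂ} (hτ : τ ≠ 0) (σ u : ℂ) :
    theta1 u (σ / τ) (-1 / τ) =
      -I * (-I * τ) ^ (1 / 2 : ℂ) * cexp (π * I * σ ^ 2 * u ^ 2 / τ) * theta1 u σ τ := by
  set z := σ * u + τ / 2 + 1 / 2
  have hA : (-I * τ) ^ (1 / 2 : ℂ) ≠ 0 := by
    simp [cpow_eq_zero_iff, hτ]
  have hshift : σ / τ * u + -1 / τ / 2 + 1 / 2 = z / τ + -1 / τ := by
    field_simp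
    ring
  rw [theta1_eq_jacobiTheta₂, theta1_eq_jacobiTheta₂, hshift, jacobiTheta₂_add_left',
    jacobiTheta₂_functional_equation z τ]
  have hexp : cexp (π * I * (-1 / τ) / 4 + π * I * (σ / τ) * u) *
        cexp (-π * I * (-1 / τ + 2 * (z / τ))) =
      -I * (cexp (π * I * σ ^ 2 * u ^ 2 / τ) * cexp (π * I * τ / 4 + π * I * σ * u) *
        cexp (-π * I * z ^ 2 / τ)) := by
    rw [← exp_neg_pi_div_two_mul_I, ← exp_add, ← exp_add, ← exp_add, ← exp_add]
    congr 1
    field_simp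
    ring
  rw [← mul_assoc, mul_assoc (-I) (cexp _), hexp]
  field_simp

lemma sum_add_sq_eq_of_sum_eq {ι R : Type*} [CommRing R] (s : Finset ι) {u v : ι → R} (x : R)
    (hsum : ∑ i ∈ s, u i = ∑ i ∈ s, v i) (hsq : ∑ i ∈ s, u i ^ 2 = ∑ i ∈ s, v i ^ 2) :
    ∑ i ∈ s, (x + u i) ^ 2 = ∑ i ∈ s, (x + v i) ^ 2 := by
  simp only [add_sq, Finset.sum_add_distrib, ← Finset.mul_sum, hsum, hsq]

lemma prod_div_eq_of_gaussian_factor {ι : Type*} (f g : ℂ → ℂ) (s : Finset ι) {c a : ℂ}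
    (hc : c ≠ 0) (hfg : ∀ w, f w = c * cexp (a * w ^ 2) * g w) {p q : ι → ℂ}
    (hpq : ∑ i ∈ s, p i ^ 2 = ∑ i ∈ s, q i ^ 2) :
    ∏ i ∈ s, f (p i) / f (q i) = ∏ i ∈ s, g (p i) / g (q i) := by
  have hfactor : ∀ i, f (p i) / f (q i) =
      cexp (a * (p i ^ 2 - q i ^ 2)) * (g (p i) / g (q i)) := by
    intro i
    rw [hfg, hfg, mul_assoc, mul_assoc, mul_div_mul_left _ _ hc, mul_div_mul_comm,
      ← exp_sub, mul_sub]
  rw [Finset.prod_congr rfl fun i _ => hfactor i, Finset.prod_mul_distrib, ← exp_sum,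
    ← Finset.mul_sum, Finset.sum_sub_distrib, hpq, sub_self, mul_zero, exp_zero, one_mul]

theorem balanced_modular_term_ratio_general (σ τ : ℂ) (hτ : 0 < τ.im)
    (r : ℕ) (z : ℂ) (u v : Fin r → ℂ)
    (hbal : ∑ m, u m = ∑ m, v m)
    (hmod : ∑ m, (u m) ^ 2 = ∑ m, (v m) ^ 2) (x : ℂ) :
    (z * ∏ m, theta1 (x + u m) (σ / τ) (-1 / τ) / theta1 (x + v m) (σ / τ) (-1 / τ) =
      z * ∏ m, theta1 (x + u m) σ τ / theta1 (x + v m) σ τ) ∧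
    (z * ∏ m, theta1 (x + u m) σ (τ + 1) / theta1 (x + v m) σ (τ + 1) =
      z * ∏ m, theta1 (x + u m) σ τ / theta1 (x + v m) σ τ) := by
  have hτ0 : τ ≠ 0 := fun h => by simp [h] at hτ
  have hsq := sum_add_sq_eq_of_sum_eq Finset.univ x hbal hmod
  refine ⟨congrArg (z * ·) ?_, congrArg (z * ·) ?_⟩
  · have hc : -I * (-I * τ) ^ (1 / 2 : ℂ) ≠ 0 := by simp [cpow_eq_zero_iff, hτ0]
    refine prod_div_eq_of_gaussian_factor (fun w => theta1 w (σ / τ) (-1 / τ))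
      (fun w => theta1 w σ τ) _ hc (a := π * I * σ ^ 2 / τ) (fun w => ?_) hsq
    rw [theta1_neg_inv hτ0]
    ring_nf
  · refine prod_div_eq_of_gaussian_factor (fun w => theta1 w σ (τ + 1)) (fun w => theta1 w σ τ)
      _ (exp_ne_zero (π * I / 4)) (a := 0) (fun w => ?_) hsq
    rw [theta1_add_one, zero_mul, exp_zero, mul_one]

/-- Under the balancing condition `∑ u_m = ∑ v_m` and the modularity condition
`∑ u_m² = ∑ v_m²`, the term ratio `h(x) = z ∏ [x+u_m]/[x+v_m]` is modular
invariant under both `SL(2,ℤ)` generators. -/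
theorem balanced_modular_term_ratio (σ τ : ℂ) (hσ : 0 < σ.im) (hτ : 0 < τ.im)
    (r : ℕ) (z : ℂ) (u v : Fin r → ℂ)
    (hbal : ∑ m, u m = ∑ m, v m)
    (hmod : ∑ m, (u m) ^ 2 = ∑ m, (v m) ^ 2) (x : ℂ)
    (hd0 : ∀ m, theta1 (x + v m) σ τ ≠ 0)
    (hd1 : ∀ m, theta1 (x + v m) (σ / τ) (-1 / τ) ≠ 0)
    (hd2 : ∀ m, theta1 (x + v m) σ (τ + 1) ≠ 0) :
    (z * ∏ m, theta1 (x + u m) (σ / τ) (-1 / τ) / theta1 (x + v m) (σ / τ) (-1 / τ) =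
      z * ∏ m, theta1 (x + u m) σ τ / theta1 (x + v m) σ τ) ∧
    (z * ∏ m, theta1 (x + u m) σ (τ + 1) / theta1 (x + v m) σ (τ + 1) =
      z * ∏ m, theta1 (x + u m) σ τ / theta1 (x + v m) σ τ) :=
  balanced_modular_term_ratio_general σ τ hτ r z u v hbal hmod x
end
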